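/- The number of 132-avoiding permutations satisfies the Catalan recurrence: S_n(132) = sum over i from 1 to n of S_{i-1}(132) · S_{n-i}(132), with S_0(132) = 1. -/

import Mathlib

/-- `p` contains the pattern `q` (classical, non-consecutive sense). -/
def PermContains {n k : ℕ} (p : Equiv.Perm (Fin n)) (q : Equiv.Perm (Fin k)) : Prop :=
  ∃ f : Fin k ↪o Fin n, ∀ j r : Fin k, q j < q r ↔ p (f j) < p (f r)

/-- `p` avoids the pattern `q`. -/
def PermAvoids {n k : ℕ} (p : Equiv.Perm (Fin n)) (q : Equiv.Perm (Fin k)) : Prop :=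
  ¬ PermContains p q

/-- `S n q` is the number of permutations of length `n` avoiding the pattern `q`. -/
noncomputable def S (n : ℕ) {k : ℕ} (q : Equiv.Perm (Fin k)) : ℕ :=
  Nat.card {p : Equiv.Perm (Fin n) // PermAvoids p q}

/-- The pattern 132. -/
def p132 : Equiv.Perm (Fin 3) := Equiv.swap 1 2

lemma contains132_iff {n : ℕ} (p : Equiv.Perm (Fin n)) :
    PermContains p p132 ↔ ∃ i j k : Fin n, i < j ∧ j < k ∧ p i < p k ∧ p k < p j := by
  constructor
  · rintro ⟨f, hf⟩
    refine ⟨f 0, f 1, f 2, ?_, ?_, ?_, ?_⟩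
    · exact f.strictMono (by decide)
    · exact f.strictMono (by decide)
    · exact (hf 0 2).mp (by decide)
    · exact (hf 2 1).mp (by decide)
  · rintro ⟨i, j, k, hij, hjk, h1, h2⟩
    have hmono : StrictMono ![i, j, k] := by
      intro a b hab
      fin_cases a <;> fin_cases b <;> simp_all <;>
        first | exact hij | exact hjk | exact lt_trans hij hjk
    refine ⟨OrderEmbedding.ofStrictMono ![i, j, k] hmono, ?_⟩
    have he : ∀ a : Fin 3, (OrderEmbedding.ofStrictMono ![i, j, k] hmono) a = ![i, j, k] a :=
      fun a => rfl
    intro a b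
    have hik := lt_trans h1 h2
    fin_cases a <;> fin_cases b <;>
      simp only [he, Matrix.cons_val_zero, Matrix.cons_val_one, Matrix.head_cons,
        Matrix.cons_val_two, Matrix.tail_cons] <;>
      constructor <;> intro h <;>
      first
        | exact absurd h (by decide)
        | exact absurd h (lt_irrefl _)
        | exact h1 | exact h2 | exact hik | decide
        | exact absurd h (not_lt_of_gt h1)
        | exact absurd h (not_lt_of_gt h2)
        | exact absurd h (not_lt_of_gt hik)

section Glue
variable {m i : ℕ} (hi : i ≤ m) (a : Equiv.Perm (Fin i)) (b : Equiv.Perm (Fin (m - i)))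

def gfun : Fin (m+1) → Fin (m+1) := fun x =>
  if h : x.val < i then ⟨(m - i) + (a ⟨x.val, h⟩).val, by have := (a ⟨x.val, h⟩).2; omega⟩
  else if h2 : x.val = i then ⟨m, by omega⟩
  else ⟨(b ⟨x.val - i - 1, by omega⟩).val, by have := (b ⟨x.val - i - 1, by omega⟩).2; omega⟩

def ginv : Fin (m+1) → Fin (m+1) := fun y =>
  if h : y.val < m - i then
    ⟨(b.symm ⟨y.val, h⟩).val + i + 1, by have := (b.symm ⟨y.val, h⟩).2; omega⟩
  else if h2 : y.val = m then ⟨i, by omega⟩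
  else ⟨(a.symm ⟨y.val - (m - i), by omega⟩).val,
    by have := (a.symm ⟨y.val - (m - i), by omega⟩).2; omega⟩

lemma gfun_val_left (x : Fin (m+1)) (j : Fin i) (hx : x.val = j.val) :
    (gfun hi a b x).val = (m - i) + (a j).val := by
  unfold gfun
  have h : x.val < i := by have := j.2; omega
  rw [dif_pos h]
  have : (⟨x.val, h⟩ : Fin i) = j := Fin.ext hx
  simp only [this]

lemma gfun_val_mid (x : Fin (m+1)) (hx : x.val = i) :
    (gfun hi a b x).val = m := by
  unfold gfun
  rw [dif_neg (by omega), dif_pos hx]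

lemma gfun_val_right (x : Fin (m+1)) (j : Fin (m - i)) (hx : x.val = i + 1 + j.val) :
    (gfun hi a b x).val = (b j).val := by
  unfold gfun
  have hj := j.2
  rw [dif_neg (by omega), dif_neg (by omega)]
  have : (⟨x.val - i - 1, by omega⟩ : Fin (m - i)) = j := Fin.ext (by simp; omega)
  simp only [this]

lemma ginv_val_small (y : Fin (m+1)) (j : Fin (m - i)) (hy : y.val = j.val) :
    (ginv hi a b y).val = (b.symm j).val + i + 1 := by
  unfold ginv
  have h : y.val < m - i := by have := j.2; omega
  rw [dif_pos h]
  have : (⟨y.val, h⟩ : Fin (m - i)) = j := Fin.ext hy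
  simp only [this]

lemma ginv_val_max (y : Fin (m+1)) (hy : y.val = m) :
    (ginv hi a b y).val = i := by
  unfold ginv
  rw [dif_neg (by omega), dif_pos hy]

lemma ginv_val_big (y : Fin (m+1)) (j : Fin i) (hy : y.val = (m - i) + j.val) :
    (ginv hi a b y).val = (a.symm j).val := by
  unfold ginv
  have hj := j.2
  rw [dif_neg (by omega), dif_neg (by omega)]
  have : (⟨y.val - (m - i), by omega⟩ : Fin i) = j := Fin.ext (by simp; omega)
  simp only [this]

def glue : Equiv.Perm (Fin (m+1)) where
  toFun := gfun hi a b
  invFun := ginv hi a b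
  left_inv := by
    intro x
    apply Fin.ext
    rcases lt_trichotomy x.val i with h | h | h
    · rw [ginv_val_big hi a b _ (a ⟨x.val, h⟩) (gfun_val_left hi a b x ⟨x.val, h⟩ rfl),
        Equiv.symm_apply_apply]
    · rw [ginv_val_max hi a b _ (gfun_val_mid hi a b x h), h]
    · have hb : x.val - i - 1 < m - i := by omega
      rw [ginv_val_small hi a b _ (b ⟨x.val - i - 1, hb⟩)
        (gfun_val_right hi a b x ⟨x.val - i - 1, hb⟩ (by simp; omega)),
        Equiv.symm_apply_apply]
      simp
      omega
  right_inv := by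
    intro y
    apply Fin.ext
    rcases lt_or_ge y.val (m - i) with h | h
    · rw [gfun_val_right hi a b _ (b.symm ⟨y.val, h⟩)
        (by rw [ginv_val_small hi a b y ⟨y.val, h⟩ rfl]; omega), Equiv.apply_symm_apply]
    · have hy2 := y.2
      rcases eq_or_ne y.val m with he | hne
      · rw [gfun_val_mid hi a b _ (ginv_val_max hi a b y he), he]
      · have ha : y.val - (m - i) < i := by omega
        rw [gfun_val_left hi a b _ (a.symm ⟨y.val - (m - i), ha⟩) ?_, Equiv.apply_symm_apply]
        · simp; omega
        · exact ginv_val_big hi a b y ⟨y.val - (m - i), ha⟩ (by simp; omega)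

lemma glue_apply (x : Fin (m+1)) : (glue hi a b) x = gfun hi a b x := rfl

lemma glue_val_lt (x : Fin (m+1)) (h : x.val < i) :
    ((glue hi a b) x).val = m - i + (a ⟨x.val, h⟩).val :=
  gfun_val_left hi a b x ⟨x.val, h⟩ rfl

lemma glue_val_eq (x : Fin (m+1)) (h : x.val = i) : ((glue hi a b) x).val = m :=
  gfun_val_mid hi a b x h

lemma glue_val_gt (x : Fin (m+1)) (h : i < x.val) :
    ((glue hi a b) x).val = (b ⟨x.val - i - 1, by omega⟩).val :=
  gfun_val_right hi a b x ⟨x.val - i - 1, by omega⟩ (by simp; omega)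

lemma glue_avoids (ha : PermAvoids a p132) (hb : PermAvoids b p132) :
    PermAvoids (glue hi a b) p132 := by
  rw [PermAvoids, contains132_iff]
  rintro ⟨x, y, z, hxy, hyz, h1, h2⟩
  rw [Fin.lt_def] at hxy hyz h1 h2
  rcases lt_trichotomy z.val i with hz | hz | hz
  · have hy : y.val < i := by omega
    have hx : x.val < i := by omega
    rw [glue_val_lt hi a b x hx, glue_val_lt hi a b z hz] at h1
    rw [glue_val_lt hi a b z hz, glue_val_lt hi a b y hy] at h2
    exact ha ((contains132_iff a).mpr ⟨⟨x.val, hx⟩, ⟨y.val, hy⟩, ⟨z.val, hz⟩,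
      by rw [Fin.lt_def]; exact hxy, by rw [Fin.lt_def]; exact hyz,
      by rw [Fin.lt_def]; omega, by rw [Fin.lt_def]; omega⟩)
  · rw [glue_val_eq hi a b z hz] at h2
    have := ((glue hi a b) y).2
    omega
  · rcases lt_trichotomy x.val i with hx | hx | hx
    · rw [glue_val_lt hi a b x hx, glue_val_gt hi a b z hz] at h1
      have := (b ⟨z.val - i - 1, by omega⟩).2
      omega
    · rw [glue_val_eq hi a b x hx] at h1
      have := ((glue hi a b) z).2
      omega
    · have hy : i < y.val := by omega
      rw [glue_val_gt hi a b x hx, glue_val_gt hi a b z hz] at h1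
      rw [glue_val_gt hi a b z hz, glue_val_gt hi a b y hy] at h2
      exact hb ((contains132_iff b).mpr ⟨⟨x.val - i - 1, by omega⟩, ⟨y.val - i - 1, by omega⟩,
        ⟨z.val - i - 1, by omega⟩,
        by rw [Fin.lt_def]; simp; omega, by rw [Fin.lt_def]; simp; omega,
        by rw [Fin.lt_def]; omega, by rw [Fin.lt_def]; omega⟩)

end Glue

section Decomp
variable {m : ℕ} (p : Equiv.Perm (Fin (m+1))) (i : Fin (m+1))

lemma key_lemma (hav : PermAvoids p p132) (hmax : p i = Fin.last m)
    (j k : Fin (m+1)) (hj : j < i) (hk : i < k) : p k < p j := by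
  by_contra hc
  push_neg at hc
  have hne : p j ≠ p k := fun h => absurd (p.injective h) (by intro h'; subst h'; exact absurd hk (not_lt_of_gt hj))
  have hlt : p j < p k := lt_of_le_of_ne hc hne
  have hki : p k < p i := by
    rw [hmax]
    exact lt_of_le_of_ne (Fin.le_last _)
      (fun h => absurd (p.injective (h.trans hmax.symm)) (ne_of_gt hk))
  exact hav ((contains132_iff p).mpr ⟨j, i, k, hj, hk, hlt, hki⟩)

lemma left_bounds (hav : PermAvoids p p132) (hmax : p i = Fin.last m)
    (j : Fin (m+1)) (hj : j < i) : m - i.val ≤ (p j).val ∧ (p j).val < m := by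
  constructor
  · have hsub : (Finset.Ioi i).image p ⊆ Finset.Iio (p j) := by
      intro v hv
      rw [Finset.mem_image] at hv
      obtain ⟨k, hk, rfl⟩ := hv
      rw [Finset.mem_Ioi] at hk
      rw [Finset.mem_Iio]
      exact key_lemma p i hav hmax j k hj hk
    have hc := Finset.card_le_card hsub
    rw [Finset.card_image_of_injective _ p.injective, Fin.card_Ioi, Fin.card_Iio] at hc
    omega
  · have hne : p j ≠ Fin.last m := fun h =>
      absurd (p.injective (h.trans hmax.symm)) (ne_of_lt hj)
    have h2 := (p j).2
    have : (p j).val ≠ m := fun h => hne (Fin.ext h)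
    omega

lemma right_bound (hav : PermAvoids p p132) (hmax : p i = Fin.last m)
    (k : Fin (m+1)) (hk : i < k) : (p k).val < m - i.val := by
  have hsub : (Finset.Iic i).image p ⊆ Finset.Ioi (p k) := by
    intro v hv
    rw [Finset.mem_image] at hv
    obtain ⟨j, hj, rfl⟩ := hv
    rw [Finset.mem_Iic] at hj
    rw [Finset.mem_Ioi]
    rcases lt_or_eq_of_le hj with h | h
    · exact key_lemma p i hav hmax j k h hk
    · subst h
      rw [hmax]
      exact lt_of_le_of_ne (Fin.le_last _)
        (fun h => absurd (p.injective (h.trans hmax.symm)) (ne_of_gt hk))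
  have hc := Finset.card_le_card hsub
  rw [Finset.card_image_of_injective _ p.injective, Fin.card_Iic, Fin.card_Ioi] at hc
  have := (p k).2
  omega

end Decomp

section Fiber
variable {m : ℕ}

lemma glue_val_left' {i : ℕ} (hi : i ≤ m) (a : Equiv.Perm (Fin i)) (b : Equiv.Perm (Fin (m - i)))
    (x : Fin (m+1)) (j : Fin i) (hx : x.val = j.val) :
    ((glue hi a b) x).val = (m - i) + (a j).val :=
  gfun_val_left hi a b x j hx

lemma glue_val_right' {i : ℕ} (hi : i ≤ m) (a : Equiv.Perm (Fin i)) (b : Equiv.Perm (Fin (m - i)))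
    (x : Fin (m+1)) (j : Fin (m - i)) (hx : x.val = i + 1 + j.val) :
    ((glue hi a b) x).val = (b j).val :=
  gfun_val_right hi a b x j hx

def Fib (i : Fin (m+1)) : Type :=
  {x : {p : Equiv.Perm (Fin (m+1)) // PermAvoids p p132} // x.1 i = Fin.last m}

def Fmap (i : Fin (m+1)) :
    ({a : Equiv.Perm (Fin i.val) // PermAvoids a p132} ×
      {b : Equiv.Perm (Fin (m - i.val)) // PermAvoids b p132}) → Fib i := fun q =>
  ⟨⟨glue (Fin.is_le i) q.1.1 q.2.1, glue_avoids (Fin.is_le i) q.1.1 q.2.1 q.1.2 q.2.2⟩,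
    Fin.ext (glue_val_eq (Fin.is_le i) q.1.1 q.2.1 i rfl)⟩

lemma Fmap_injective (i : Fin (m+1)) : Function.Injective (Fmap (m := m) i) := by
  intro q q' h
  have hg : glue (Fin.is_le i) q.1.1 q.2.1 = glue (Fin.is_le i) q'.1.1 q'.2.1 :=
    congrArg (fun t => t.1.1) h
  have hii := i.2
  have ha : q.1.1 = q'.1.1 := by
    apply Equiv.ext; intro j; apply Fin.ext
    have hj := j.2
    have h1 := congrArg (fun e : Equiv.Perm (Fin (m+1)) =>
      (e ⟨j.val, by omega⟩).val) hg
    rw [glue_val_left' (Fin.is_le i) q.1.1 q.2.1 ⟨j.val, by omega⟩ j rfl,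
      glue_val_left' (Fin.is_le i) q'.1.1 q'.2.1 ⟨j.val, by omega⟩ j rfl] at h1
    omega
  have hb : q.2.1 = q'.2.1 := by
    apply Equiv.ext; intro j; apply Fin.ext
    have hj := j.2
    have h1 := congrArg (fun e : Equiv.Perm (Fin (m+1)) =>
      (e ⟨i.val + 1 + j.val, by omega⟩).val) hg
    rw [glue_val_right' (Fin.is_le i) q.1.1 q.2.1 ⟨i.val + 1 + j.val, by omega⟩ j rfl,
      glue_val_right' (Fin.is_le i) q'.1.1 q'.2.1 ⟨i.val + 1 + j.val, by omega⟩ j rfl] at h1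
    exact h1
  exact Prod.ext (Subtype.ext ha) (Subtype.ext hb)

set_option maxHeartbeats 1000000 in
lemma Fmap_surjective (i : Fin (m+1)) : Function.Surjective (Fmap (m := m) i) := by
  rintro ⟨⟨p, hav⟩, hfix⟩
  have hfix' : p i = Fin.last m := hfix
  have hii := i.2
  -- the left part
  have Abound : ∀ j : Fin i.val, (p ⟨j.val, by omega⟩).val - (m - i.val) < i.val := by
    intro j
    have hj := j.2
    have hb := left_bounds p i hav hfix' ⟨j.val, by omega⟩ (by rw [Fin.lt_def]; exact hj)
    omega
  set Af : Fin i.val → Fin i.val := fun j => ⟨(p ⟨j.val, by omega⟩).val - (m - i.val), Abound j⟩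
    with hAf
  have Ainj : Function.Injective Af := by
    intro j1 j2 hj
    have h1 := j1.2; have h2 := j2.2
    have e := congrArg Fin.val hj
    simp only [hAf] at e
    have lb1 := (left_bounds p i hav hfix' ⟨j1.val, by omega⟩ (by rw [Fin.lt_def]; exact j1.2)).1
    have lb2 := (left_bounds p i hav hfix' ⟨j2.val, by omega⟩ (by rw [Fin.lt_def]; exact j2.2)).1
    have : (p ⟨j1.val, by omega⟩).val = (p ⟨j2.val, by omega⟩).val := by omega
    have h9 := p.injective (Fin.ext this)
    exact Fin.ext (by simpa using congrArg Fin.val h9)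
  let aperm : Equiv.Perm (Fin i.val) := Equiv.ofBijective Af (Finite.injective_iff_bijective.mp Ainj)
  -- the right part
  set Bf : Fin (m - i.val) → Fin (m - i.val) := fun j =>
    ⟨(p ⟨i.val + 1 + j.val, by have := j.2; omega⟩).val,
      right_bound p i hav hfix' ⟨i.val + 1 + j.val, by have := j.2; omega⟩
        (by rw [Fin.lt_def]; simp; omega)⟩ with hBf
  have Binj : Function.Injective Bf := by
    intro j1 j2 hj
    have h1 := j1.2; have h2 := j2.2
    have e := congrArg Fin.val hj
    simp only [hBf] at e
    have := p.injective (Fin.ext e)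
    have := congrArg Fin.val this
    simp only at this
    exact Fin.ext (by omega)
  let bperm : Equiv.Perm (Fin (m - i.val)) :=
    Equiv.ofBijective Bf (Finite.injective_iff_bijective.mp Binj)
  -- avoidance of the pieces
  have haAv : PermAvoids aperm p132 := by
    rw [PermAvoids, contains132_iff]
    rintro ⟨x, y, z, hxy, hyz, h1, h2⟩
    rw [Fin.lt_def] at hxy hyz h1 h2
    have pfx : x.val < m + 1 := by have := x.2; omega
    have pfy : y.val < m + 1 := by have := y.2; omega
    have pfz : z.val < m + 1 := by have := z.2; omega
    have ex : (aperm x).val = (p ⟨x.val, pfx⟩).val - (m - i.val) := rfl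
    have ey : (aperm y).val = (p ⟨y.val, pfy⟩).val - (m - i.val) := rfl
    have ez : (aperm z).val = (p ⟨z.val, pfz⟩).val - (m - i.val) := rfl
    have lbx := (left_bounds p i hav hfix' ⟨x.val, pfx⟩ (by rw [Fin.lt_def]; exact x.2)).1
    have lby := (left_bounds p i hav hfix' ⟨y.val, pfy⟩ (by rw [Fin.lt_def]; exact y.2)).1
    have lbz := (left_bounds p i hav hfix' ⟨z.val, pfz⟩ (by rw [Fin.lt_def]; exact z.2)).1
    exact hav ((contains132_iff p).mpr
      ⟨⟨x.val, pfx⟩, ⟨y.val, pfy⟩, ⟨z.val, pfz⟩,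
        by rw [Fin.lt_def]; exact hxy, by rw [Fin.lt_def]; exact hyz,
        by rw [Fin.lt_def]; omega, by rw [Fin.lt_def]; omega⟩)
  have hbAv : PermAvoids bperm p132 := by
    rw [PermAvoids, contains132_iff]
    rintro ⟨x, y, z, hxy, hyz, h1, h2⟩
    rw [Fin.lt_def] at hxy hyz h1 h2
    have pfx : i.val + 1 + x.val < m + 1 := by have := x.2; omega
    have pfy : i.val + 1 + y.val < m + 1 := by have := y.2; omega
    have pfz : i.val + 1 + z.val < m + 1 := by have := z.2; omega
    have ex : (bperm x).val = (p ⟨i.val + 1 + x.val, pfx⟩).val := rfl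
    have ey : (bperm y).val = (p ⟨i.val + 1 + y.val, pfy⟩).val := rfl
    have ez : (bperm z).val = (p ⟨i.val + 1 + z.val, pfz⟩).val := rfl
    exact hav ((contains132_iff p).mpr
      ⟨⟨i.val + 1 + x.val, pfx⟩, ⟨i.val + 1 + y.val, pfy⟩, ⟨i.val + 1 + z.val, pfz⟩,
        by rw [Fin.mk_lt_mk]; omega, by rw [Fin.mk_lt_mk]; omega,
        by rw [Fin.lt_def]; omega, by rw [Fin.lt_def]; omega⟩)
  refine ⟨⟨⟨aperm, haAv⟩, ⟨bperm, hbAv⟩⟩, ?_⟩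
  apply Subtype.ext
  apply Subtype.ext
  apply Equiv.ext
  intro x
  apply Fin.ext
  show ((glue (Fin.is_le i) aperm bperm) x).val = (p x).val
  have hx2 := x.2
  rcases lt_trichotomy x.val i.val with h | h | h
  · rw [glue_val_lt (Fin.is_le i) aperm bperm x h]
    have e : (aperm ⟨x.val, h⟩).val = (p ⟨x.val, by omega⟩).val - (m - i.val) := rfl
    rw [e]
    have hxx : (⟨x.val, by omega⟩ : Fin (m+1)) = x := Fin.ext rfl
    rw [hxx]
    have lb := (left_bounds p i hav hfix' x (by rw [Fin.lt_def]; exact h)).1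
    omega
  · rw [glue_val_eq (Fin.is_le i) aperm bperm x h]
    have hxi : x = i := Fin.ext h
    rw [hxi, hfix']
    rfl
  · rw [glue_val_gt (Fin.is_le i) aperm bperm x h]
    have e : (bperm ⟨x.val - i.val - 1, by omega⟩).val
        = (p ⟨i.val + 1 + (x.val - i.val - 1), by omega⟩).val := rfl
    rw [e]
    have hxx : (⟨i.val + 1 + (x.val - i.val - 1), by omega⟩ : Fin (m+1)) = x :=
      Fin.ext (by simp; omega)
    rw [hxx]

end Fiber

instance fibFinite {m : ℕ} (i : Fin (m+1)) : Finite (Fib i) := by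
  unfold Fib
  infer_instance

lemma card_fiber {m : ℕ} (i : Fin (m+1)) :
    Nat.card (Fib i) = S i.val p132 * S (m - i.val) p132 := by
  have h := Nat.card_eq_of_bijective (Fmap (m := m) i) ⟨Fmap_injective i, Fmap_surjective i⟩
  rw [Nat.card_prod] at h
  exact h.symm

lemma card_sigma' {N : ℕ} (f : Fin N → Type) [∀ i, Finite (f i)] :
    Nat.card (Σ i, f i) = ∑ i, Nat.card (f i) := by
  haveI := fun i => Fintype.ofFinite (f i)
  simp only [Nat.card_eq_fintype_card]
  exact Fintype.card_sigma

lemma card_partition (m : ℕ) :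
    S (m+1) p132 = ∑ i : Fin (m+1), S i.val p132 * S (m - i.val) p132 := by
  have e1 : {p : Equiv.Perm (Fin (m+1)) // PermAvoids p p132} ≃ Σ i : Fin (m+1), Fib i := by
    refine (Equiv.sigmaFiberEquiv
      (fun x : {p : Equiv.Perm (Fin (m+1)) // PermAvoids p p132} =>
        x.1.symm (Fin.last m))).symm.trans ?_
    apply Equiv.sigmaCongrRight
    intro i
    apply Equiv.subtypeEquivRight
    intro x
    rw [Equiv.symm_apply_eq, eq_comm]
  rw [S, Nat.card_congr e1, card_sigma']
  exact Finset.sum_congr rfl fun i _ => card_fiber i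

theorem sn_132_catalan_recurrence :
    S 0 p132 = 1 ∧
    ∀ n : ℕ, 0 < n →
      S n p132 = ∑ i ∈ Finset.Icc 1 n, S (i - 1) p132 * S (n - i) p132 := by
  constructor
  · have h : ∀ p : Equiv.Perm (Fin 0), PermAvoids p p132 := fun p ⟨f, _⟩ => (f 0).elim0
    haveI : Unique {p : Equiv.Perm (Fin 0) // PermAvoids p p132} :=
      { default := ⟨1, h 1⟩, uniq := fun x => Subtype.ext (Equiv.ext fun v => v.elim0) }
    exact Nat.card_unique
  · intro n hn
    cases n with
    | zero => omega
    | succ m =>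
      rw [card_partition m,
        Fin.sum_univ_eq_sum_range (fun j => S j p132 * S (m - j) p132) (m+1)]
      rw [← Finset.Ico_add_one_right_eq_Icc, Finset.sum_Ico_eq_sum_range,
        show m + 1 + 1 - 1 = m + 1 from rfl]
      apply Finset.sum_congr rfl
      intro j hj
      rw [show 1 + j - 1 = j from by omega, show m + 1 - (1 + j) = m - j from by omega]
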